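/- arXiv:1605.01294 — 3 statements merged into one kernel-verified Lean document; each statement's English description precedes it below -/
import Mathlib

section
/- The elliptic curve given by r^2 = q(q^2 - q + 1) has only the rational points (q, r) = (0, 0), (1, 1), and (1, -1) (together with the point at infinity). -/
/-!
Write `q = n / d` in lowest terms. Then `(r d²)² = n · d · (n² - n d + d²)` is an integer square
with pairwise coprime, nonnegative factors, so `n = s²`, `d = k²`, `n² - n d + d² = t²`, that is
`s⁴ - s² k² + k⁴ = t²` with `s, k` coprime.

This quartic has no primitive solutions besides `s k = 0` and `s² = k²`, by descent on `t`.
If `x, y` are both odd, then `(x y, x² - y², z)` is a primitive Pythagorean triple whose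
parameters `m, n` satisfy `((x² + y²) / 2)² = m⁴ - m² n² + n⁴`. If `y = 2 w` is even, the coprime
numbers `u, v = (z ∓ (x² - 2 w²)) / 2` have `u v = 3 w⁴`. When `3 ∣ u` the two cofactors of `3` are
fourth powers `a⁴, b⁴`, and `x² + (2 a²)² = (a² + b²)²` gives a smaller solution `(e, f, b)`.
When `3 ∣ v`, `x² + (a - b)² = (2 b)²` for squares `a², b²`, which is impossible mod 4 for odd `x`.
-/

theorem Int.exists_pow_eq_of_isCoprime {a b c : ℤ} {k : ℕ} (hk : Even k) (hab : IsCoprime a b)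
    (ha : 0 ≤ a) (h : a * b = c ^ k) : ∃ d, 0 ≤ d ∧ a = d ^ k := by
  obtain ⟨d, hd⟩ := exists_associated_pow_of_mul_eq_pow' hab h
  refine ⟨|d|, abs_nonneg d, ?_⟩
  rw [hk.pow_abs]
  rcases Int.associated_iff.mp hd with hd | hd <;> linarith [hk.pow_nonneg d]

theorem Int.exists_of_sq_add_sq_eq_sq {a b c : ℤ} (hab : IsCoprime a b) (ha : Odd a) (hc : 0 < c)
    (h : a ^ 2 + b ^ 2 = c ^ 2) :
    ∃ m n, IsCoprime m n ∧ 0 ≤ m ∧ a = m ^ 2 - n ^ 2 ∧ b = 2 * m * n ∧ c = m ^ 2 + n ^ 2 := by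
  have htriple : PythagoreanTriple a b c := by
    unfold PythagoreanTriple
    linear_combination h
  obtain ⟨m, n, ha, hb, hc, hmn, -, hm⟩ := htriple.coprime_classification'
    (Int.isCoprime_iff_gcd_eq_one.mp hab) (Int.odd_iff.mp ha) hc
  exact ⟨m, n, Int.isCoprime_iff_gcd_eq_one.mpr hmn, hm, ha, hb, hc⟩

theorem IsCoprime.of_add_of_mul {R : Type*} [CommRing R] {a b : R}
    (h : IsCoprime (a + b) (a * b)) : IsCoprime a b :=
  .of_add_mul_left_left (z := 1) (by simpa only [mul_one] using h.of_mul_right_right)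

theorem Int.even_of_sq_add_sq_eq_four_mul {x s t : ℤ} (h : x ^ 2 + s ^ 2 = 4 * t) : Even x := by
  by_contra hx
  have hx2 := Int.sq_mod_four_eq_one_of_odd (Int.not_even_iff_odd.mp hx)
  rcases Int.even_or_odd s with ⟨j, rfl⟩ | hs
  · have : (j + j) ^ 2 = 4 * j ^ 2 := by ring
    omega
  · have := Int.sq_mod_four_eq_one_of_odd hs
    omega

structure IsNontrivialQuarticSolution (x y z : ℤ) : Prop where
  pos_x : 0 < x
  pos_y : 0 < y
  pos_z : 0 < z
  sq_ne : x ^ 2 ≠ y ^ 2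
  coprime : IsCoprime x y
  eq : x ^ 4 - x ^ 2 * y ^ 2 + y ^ 4 = z ^ 2

theorem exists_isNontrivialQuarticSolution_of_sq_add_sq {x a b : ℤ} (hx : Odd x) (ha : 0 < a)
    (hb : 0 < b) (hxa : IsCoprime x (2 * a ^ 2))
    (h : x ^ 2 + (2 * a ^ 2) ^ 2 = (a ^ 2 + b ^ 2) ^ 2) :
    ∃ e f, IsNontrivialQuarticSolution e f b := by
  obtain ⟨m, n, hmn, hm, hxmn, ha2, hb2⟩ := Int.exists_of_sq_add_sq_eq_sq hxa hx (by positivity) h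
  have hprod : m * n = a ^ 2 := by linarith
  have hm_pos : 0 < m :=
    hm.lt_of_ne (by rintro rfl; rw [zero_mul] at hprod; exact (pow_pos ha 2).ne hprod)
  have hn_pos : 0 < n := (pos_iff_pos_of_mul_pos (hprod ▸ by positivity)).mp hm_pos
  obtain ⟨e, he, rfl⟩ := Int.exists_pow_eq_of_isCoprime even_two hmn hm hprod
  obtain ⟨f, hf, rfl⟩ := Int.exists_pow_eq_of_isCoprime even_two hmn.symm hn_pos.le
    (by rw [mul_comm, hprod])
  refine ⟨e, f, he.lt_of_ne ?_, hf.lt_of_ne ?_, hb, ?_, ?_, ?_⟩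
  · rintro rfl
    simp at hm_pos
  · rintro rfl
    simp at hn_pos
  · intro hef
    rw [hef, sub_self] at hxmn
    simp [hxmn] at hx
  · exact (IsCoprime.pow_iff two_pos two_pos).mp hmn
  · linear_combination -hb2 - hprod

theorem exists_isNontrivialQuarticSolution_lt_of_mul_eq_pow_four {x w s t : ℤ} (hx : Odd x)
    (hxw : IsCoprime x (2 * w)) (hst : IsCoprime s t) (hs : 0 < s) (ht : 0 < t)
    (hprod : s * t = w ^ 4) (hdiff : t - 3 * s = x ^ 2 - 2 * w ^ 2) :
    ∃ x' y' z', IsNontrivialQuarticSolution x' y' z' ∧ z' < 3 * s + t := by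
  obtain ⟨a, ha, rfl⟩ := Int.exists_pow_eq_of_isCoprime (by decide : Even 4) hst hs.le hprod
  obtain ⟨b, hb, rfl⟩ := Int.exists_pow_eq_of_isCoprime (by decide : Even 4) hst.symm ht.le
    (by rw [mul_comm, hprod])
  have ha : 0 < a := ha.lt_of_ne (by rintro rfl; simp at hs)
  have hb : 0 < b := hb.lt_of_ne (by rintro rfl; simp at ht)
  have hw : w ^ 2 = a ^ 2 * b ^ 2 :=
    (pow_left_inj₀ (sq_nonneg w) (by positivity) two_ne_zero).mp (by linear_combination -hprod)
  have hxa : IsCoprime x (2 * a ^ 2) :=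
    (hxw.pow_right (n := 2)).of_isCoprime_of_dvd_right ⟨2 * b ^ 2, by linear_combination 4 * hw⟩
  obtain ⟨e, f, hef⟩ := exists_isNontrivialQuarticSolution_of_sq_add_sq hx ha hb hxa
    (by linear_combination -hdiff + 2 * hw)
  refine ⟨e, f, b, hef, ?_⟩
  nlinarith [le_self_pow₀ (by omega : 1 ≤ b) (by decide : (4 : ℕ) ≠ 0), pow_pos ha 4]

theorem even_of_mul_eq_pow_four_of_three_mul_sub_eq {x w s t : ℤ} (hst : IsCoprime s t)
    (hs : 0 ≤ s) (ht : 0 ≤ t) (hprod : s * t = w ^ 4) (hdiff : 3 * t - s = x ^ 2 - 2 * w ^ 2) :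
    Even x := by
  obtain ⟨a, ha, rfl⟩ := Int.exists_pow_eq_of_isCoprime even_two hst hs (c := w ^ 2)
    (by rw [hprod]; ring)
  obtain ⟨b, hb, rfl⟩ := Int.exists_pow_eq_of_isCoprime even_two hst.symm ht (c := w ^ 2)
    (by rw [mul_comm, hprod]; ring)
  have hw : w ^ 2 = a * b :=
    (pow_left_inj₀ (sq_nonneg w) (by positivity) two_ne_zero).mp (by linear_combination -hprod)
  exact Int.even_of_sq_add_sq_eq_four_mul (s := a - b) (t := b ^ 2)
    (by linear_combination -hdiff + 2 * hw)

section Quartic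

variable {x y z : ℤ}

theorem not_three_dvd_of_quartic (hxy : IsCoprime x y)
    (h : x ^ 4 - x ^ 2 * y ^ 2 + y ^ 4 = z ^ 2) : ¬ 3 ∣ z := by
  intro h3
  have key : ∀ a b : ZMod 3, a ^ 4 - a ^ 2 * b ^ 2 + b ^ 4 = 0 → a = 0 ∧ b = 0 := by decide
  have hz : (x : ZMod 3) ^ 4 - (x : ZMod 3) ^ 2 * (y : ZMod 3) ^ 2 + (y : ZMod 3) ^ 4 = 0 := by
    have := congrArg (Int.cast : ℤ → ZMod 3) h
    push_cast at this
    rw [this, (ZMod.intCast_zmod_eq_zero_iff_dvd z 3).mpr h3]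
    ring
  obtain ⟨hx, hy⟩ := key _ _ hz
  rw [ZMod.intCast_zmod_eq_zero_iff_dvd] at hx hy
  exact Int.prime_three.not_isUnit (hxy.isUnit_of_dvd' hx hy)

theorem isCoprime_of_quartic (hxy : IsCoprime x y)
    (h : x ^ 4 - x ^ 2 * y ^ 2 + y ^ 4 = z ^ 2) : IsCoprime z y := by
  have hz2 : IsCoprime (z ^ 2) y := by
    rw [← h, show x ^ 4 - x ^ 2 * y ^ 2 + y ^ 4 = x ^ 4 + y * (y ^ 3 - x ^ 2 * y) by ring]
    exact (hxy.pow_left (m := 4)).add_mul_left_left _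
  exact (IsCoprime.pow_left_iff two_pos).mp hz2

namespace IsNontrivialQuarticSolution

theorem symm (hs : IsNontrivialQuarticSolution x y z) : IsNontrivialQuarticSolution y x z where
  pos_x := hs.pos_y
  pos_y := hs.pos_x
  pos_z := hs.pos_z
  sq_ne := hs.sq_ne.symm
  coprime := hs.coprime.symm
  eq := by linear_combination hs.eq

theorem exists_lt_of_even (hs : IsNontrivialQuarticSolution x y z) (hy : Even y) :
    ∃ x' y' z', IsNontrivialQuarticSolution x' y' z' ∧ z' < z := by
  obtain ⟨w, rfl⟩ := hy.two_dvd
  have hw : 0 < w := by linarith [hs.pos_y]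
  have hx : Odd x := Int.not_even_iff_odd.mp fun hx =>
    Int.prime_two.not_isUnit (hs.coprime.isUnit_of_dvd' hx.two_dvd (dvd_mul_right 2 w))
  have hzy := isCoprime_of_quartic hs.coprime hs.eq
  have hz : Odd z := Int.not_even_iff_odd.mp fun hz =>
    Int.prime_two.not_isUnit (hzy.isUnit_of_dvd' hz.two_dvd (dvd_mul_right 2 w))
  obtain ⟨u, hu⟩ := Even.add (hz.sub_odd (hx.pow (n := 2))) (even_two_mul (w ^ 2))
  -- `2u` and `2(z - u)` are `z ∓ (x² - 2w²)`, whose product is `z² - (x² - 2w²)² = 12 w⁴`.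
  have huv : u * (z - u) = 3 * w ^ 4 := by
    have : 4 * (u * (z - u)) = 4 * (3 * w ^ 4) := by
      linear_combination (2 * u - (z + x ^ 2 - 2 * w ^ 2)) * hu - hs.eq
    linarith
  have hcop : IsCoprime u (z - u) := by
    refine .of_add_of_mul ?_
    rw [add_sub_cancel, huv]
    have h3z := (Int.prime_three.coprime_iff_not_dvd.mpr
      (not_three_dvd_of_quartic hs.coprime hs.eq)).symm
    exact h3z.mul_right (hzy.of_isCoprime_of_dvd_right (dvd_mul_left w 2)).pow_right
  obtain ⟨hu_pos, hv_pos⟩ : 0 < u ∧ 0 < z - u := by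
    rcases pos_and_pos_or_neg_and_neg_of_mul_pos (huv ▸ by positivity : 0 < u * (z - u)) with
      h | h
    · exact h
    · linarith [hs.pos_z]
  rcases Int.prime_three.dvd_mul.mp ⟨w ^ 4, huv⟩ with ⟨s, rfl⟩ | ⟨t, ht⟩
  · obtain ⟨x', y', z', hs', hlt⟩ := exists_isNontrivialQuarticSolution_lt_of_mul_eq_pow_four hx
      hs.coprime (hcop.of_isCoprime_of_dvd_left (dvd_mul_left s 3)) (by linarith) hv_pos
      (by linarith) (by linear_combination hu)
    exact ⟨x', y', z', hs', by linarith⟩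
  · rw [ht] at hcop huv
    have := even_of_mul_eq_pow_four_of_three_mul_sub_eq (x := x) (w := w)
      (hcop.of_isCoprime_of_dvd_right (dvd_mul_left t 3)) hu_pos.le (by linarith) (by linarith)
      (by linear_combination hu - ht)
    exact absurd this (Int.not_even_iff_odd.mpr hx)

theorem exists_lt_of_odd_of_odd (hs : IsNontrivialQuarticSolution x y z) (hx : Odd x)
    (hy : Odd y) : ∃ x' y' z', IsNontrivialQuarticSolution x' y' z' ∧ z' < z := by
  have hcop : IsCoprime (x * y) (x ^ 2 - y ^ 2) := by
    have hx' : IsCoprime x (-y ^ 2 + x * x) :=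
      (hs.coprime.pow_right (n := 2)).neg_right.add_mul_left_right x
    have hy' : IsCoprime y (x ^ 2 + y * -y) :=
      (hs.coprime.symm.pow_right (n := 2)).add_mul_left_right (-y)
    refine IsCoprime.mul_left ?_ ?_
    · convert hx' using 1; ring
    · convert hy' using 1; ring
  obtain ⟨m, n, hmn, hm, hxy, hdiff, hz⟩ :=
    Int.exists_of_sq_add_sq_eq_sq hcop (hx.mul hy) hs.pos_z (by linear_combination hs.eq)
  obtain ⟨c, hc⟩ := (hx.pow (n := 2)).add_odd (hy.pow (n := 2))
  have hc2 : c ^ 2 = m ^ 4 - m ^ 2 * n ^ 2 + n ^ 4 := by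
    have : 4 * c ^ 2 = 4 * (m ^ 4 - m ^ 2 * n ^ 2 + n ^ 4) := by
      linear_combination (-(x ^ 2 + y ^ 2 + 2 * c)) * hc + (x ^ 2 - y ^ 2 + 2 * m * n) * hdiff +
        4 * (x * y + m ^ 2 - n ^ 2) * hxy
    linarith
  have hmn0 : m * n ≠ 0 := fun h0 => hs.sq_ne (by linear_combination hdiff + 2 * h0)
  have hm_pos : 0 < m := hm.lt_of_ne (by rintro rfl; simp at hmn0)
  have hn : n ≠ 0 := by rintro rfl; simp at hmn0
  have hc_pos : 0 < c := by nlinarith [hs.pos_x, hs.pos_y]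
  refine ⟨m, |n|, c, ⟨hm_pos, abs_pos.mpr hn, hc_pos, ?_, hmn.abs_right, ?_⟩, ?_⟩
  · rw [sq_abs]
    intro h
    have := mul_pos hs.pos_x hs.pos_y
    rw [hxy, h, sub_self] at this
    exact this.false
  · rw [(by decide : Even 4).pow_abs, sq_abs]
    linear_combination -hc2
  · refine lt_of_pow_lt_pow_left₀ 2 hs.pos_z.le ?_
    rw [hz, hc2]
    nlinarith [mul_pos (pow_pos hm_pos 2) (pow_pos (abs_pos.mpr hn) 2), sq_abs n]

theorem exists_lt (hs : IsNontrivialQuarticSolution x y z) :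
    ∃ x' y' z', IsNontrivialQuarticSolution x' y' z' ∧ z' < z := by
  rcases Int.even_or_odd y with hy | hy
  · exact hs.exists_lt_of_even hy
  rcases Int.even_or_odd x with hx | hx
  · exact hs.symm.exists_lt_of_even hx
  · exact hs.exists_lt_of_odd_of_odd hx hy

end IsNontrivialQuarticSolution

theorem not_isNontrivialQuarticSolution (x y z : ℤ) : ¬ IsNontrivialQuarticSolution x y z := by
  induction hz : z.toNat using Nat.strong_induction_on generalizing x y z with
  | _ n ih =>
    intro hs
    obtain ⟨x', y', z', hs', hlt⟩ := hs.exists_lt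
    exact ih z'.toNat (by have := hs'.pos_z; omega) x' y' z' rfl hs'

theorem mul_eq_zero_or_sq_eq_sq_of_quartic (hxy : IsCoprime x y)
    (h : x ^ 4 - x ^ 2 * y ^ 2 + y ^ 4 = z ^ 2) : x * y = 0 ∨ x ^ 2 = y ^ 2 := by
  by_contra! hne
  have hz : z ≠ 0 := by
    rintro rfl
    nlinarith [sq_nonneg (x ^ 2 - y ^ 2), sq_pos_of_ne_zero hne.1]
  refine not_isNontrivialQuarticSolution |x| |y| |z| ⟨abs_pos.mpr (left_ne_zero_of_mul hne.1),
    abs_pos.mpr (right_ne_zero_of_mul hne.1), abs_pos.mpr hz, by simpa only [sq_abs] using hne.2,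
    hxy.abs_left.abs_right, ?_⟩
  rw [(by decide : Even 4).pow_abs, (by decide : Even 4).pow_abs, sq_abs, sq_abs, sq_abs, h]

end Quartic

theorem eq_zero_or_eq_of_isSquare_mul {n d : ℤ} (hnd : IsCoprime n d) (hd : 0 < d)
    (h : IsSquare (n * d * (n ^ 2 - n * d + d ^ 2))) : n = 0 ∨ n = d := by
  obtain ⟨R, hR⟩ := h
  have hF : 0 < n ^ 2 - n * d + d ^ 2 := by nlinarith [sq_nonneg (2 * n - d)]
  have hn : 0 ≤ n := (mul_nonneg_iff_of_pos_right (mul_pos hd hF)).mp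
    (by rw [← mul_assoc, hR]; exact mul_self_nonneg R)
  have hnF : IsCoprime n (n ^ 2 - n * d + d ^ 2) := by
    have := (hnd.pow_right (n := 2)).add_mul_left_right (n - d)
    rwa [show d ^ 2 + n * (n - d) = n ^ 2 - n * d + d ^ 2 by ring] at this
  have hdF : IsCoprime d (n ^ 2 - n * d + d ^ 2) := by
    have := (hnd.symm.pow_right (n := 2)).add_mul_left_right (d - n)
    rwa [show n ^ 2 + d * (d - n) = n ^ 2 - n * d + d ^ 2 by ring] at this
  obtain ⟨s, -, rfl⟩ := Int.exists_pow_eq_of_isCoprime even_two (hnd.mul_right hnF) hn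
    (c := R) (by rw [sq R, ← hR]; ring)
  obtain ⟨k, -, rfl⟩ := Int.exists_pow_eq_of_isCoprime even_two (hnd.symm.mul_right hdF) hd.le
    (c := R) (by rw [sq R, ← hR]; ring)
  obtain ⟨t, -, ht⟩ := Int.exists_pow_eq_of_isCoprime even_two (hnF.symm.mul_right hdF.symm)
    hF.le (c := R) (by rw [sq R, ← hR]; ring)
  rcases mul_eq_zero_or_sq_eq_sq_of_quartic ((IsCoprime.pow_iff two_pos two_pos).mp hnd)
      (z := t) (by rw [← ht]; ring) with hsk | hsk
  · have hk : k ≠ 0 := by rintro rfl; simp at hd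
    simp [(mul_eq_zero.mp hsk).resolve_right hk]
  · exact Or.inr hsk

theorem stmt_4 (q r : ℚ) (h : r^2 = q * (q^2 - q + 1)) :
    (q, r) = (0, 0) ∨ (q, r) = (1, 1) ∨ (q, r) = (1, -1) := by
  have hsq : IsSquare (q.num * q.den * (q.num ^ 2 - q.num * q.den + q.den ^ 2)) := by
    rw [← Rat.isSquare_intCast_iff]
    refine ⟨r * q.den ^ 2, ?_⟩
    have hden : (q.den : ℚ) ≠ 0 := by positivity
    rw [← Rat.num_div_den q] at h
    field_simp at h
    push_cast
    linear_combination -(q.den : ℚ) * h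
  have hq : q = 0 ∨ q = 1 := by
    rcases eq_zero_or_eq_of_isSquare_mul q.isCoprime_num_den (by exact_mod_cast q.pos) hsq with
      h0 | h1
    · exact Or.inl (Rat.num_eq_zero.mp h0)
    · right
      rw [← Rat.num_div_den q, h1, Int.cast_natCast, div_self (by positivity)]
  rcases hq with rfl | rfl
  · simp_all
  · have hr : r = 1 ∨ r = -1 := sq_eq_one_iff.mp (by simpa using h)
    rcases hr with rfl | rfl <;> simp
end

section
/- Let a, p, q be rational numbers with a ≠ 0. Then x^2 + p·x + q divides x^4 + a·x^3 + a·x + 1 in ℚ[x] if and only if q = 1 and a = (p^2 - 2)/p (in particular p ≠ 0). -/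
open Polynomial

theorem stmt_6 (a p q : ℚ) (ha : a ≠ 0) :
    (X^2 + C p * X + C q : ℚ[X]) ∣ (X^4 + C a * X^3 + C a * X + 1) ↔
      q = 1 ∧ p ≠ 0 ∧ a = (p^2 - 2)/p := by
  constructor
  · intro h
    obtain ⟨Q, hQ⟩ := h
    have hD : (X^2 + C p * X + C q : ℚ[X]).Monic := by monicity!
    have hN : (X^4 + C a * X^3 + C a * X + 1 : ℚ[X]).Monic := by monicity!
    have hNdeg : (X^4 + C a * X^3 + C a * X + 1 : ℚ[X]).natDegree = 4 := by compute_degree!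
    have hQ0 : Q ≠ 0 := by
      rintro rfl
      rw [mul_zero] at hQ
      exact hN.ne_zero hQ
    have hDdeg : (X^2 + C p * X + C q : ℚ[X]).natDegree = 2 := by compute_degree!
    have hQdeg : Q.natDegree = 2 := by
      have := hD.natDegree_mul' (by simpa using hQ0)
      rw [← hQ, hNdeg, hDdeg] at this
      omega
    have hQ2 : Q.coeff 2 = 1 := by
      have h1 : ((X^2 + C p * X + C q : ℚ[X]) * Q).leadingCoeff = Q.leadingCoeff := by
        rw [leadingCoeff_mul, hD.leadingCoeff, one_mul]
      rw [← hQ, hN.leadingCoeff] at h1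
      rw [← hQdeg, ← Polynomial.leadingCoeff]
      exact h1.symm
    set b := Q.coeff 1 with hb
    set c := Q.coeff 0 with hc
    have hQform : Q = X^2 + C b * X + C c := by
      ext n
      match n with
      | 0 => simp [hc]
      | 1 => simp [hb]
      | 2 => simpa using hQ2
      | (n+3) =>
        rw [Polynomial.coeff_eq_zero_of_natDegree_lt (by omega)]
        simp
    rw [hQform] at hQ
    have e0 := Polynomial.ext_iff.1 hQ 0
    have e1 := Polynomial.ext_iff.1 hQ 1
    have e2 := Polynomial.ext_iff.1 hQ 2
    have e3 := Polynomial.ext_iff.1 hQ 3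
    simp [coeff_mul, Finset.Nat.sum_antidiagonal_eq_sum_range_succ_mk,
      Finset.sum_range_succ, coeff_one, coeff_X] at e0 e1 e2 e3
    have key : (1 - q) * (p^2 + q^2 + 1) = 0 := by
      linear_combination (p^2 + 1 - q) * e0 - p*q*e1 + (q^2 - q)*e2 + p*q*e3
    have hq1 : q = 1 := by
      have hpos : p^2 + q^2 + 1 > 0 := by positivity
      rcases mul_eq_zero.1 key with h | h
      · linarith
      · linarith
    subst hq1
    have hc1 : c = 1 := by linarith
    have hpb : p * b = -2 := by linarith
    have hp : p ≠ 0 := by rintro rfl; simp at hpb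
    refine ⟨rfl, hp, ?_⟩
    field_simp
    linear_combination p*e3 + hpb
  · rintro ⟨hq, hp, haa⟩
    subst hq
    have hap : p * a = p^2 - 2 := by rw [haa]; field_simp
    refine ⟨X^2 + C (a - p) * X + 1, ?_⟩
    have h2 : (C p : ℚ[X]) * C a = C p ^ 2 - 2 := by
      rw [← C_mul, hap]; simp [C_sub, C_pow]; exact C_eq_natCast 2
    simp only [map_one, C_sub]
    linear_combination (-X^2 : ℚ[X]) * h2
end

section
/- For no rational numbers a ≠ 0 and p, q does x^2 + p·x + q divide x^5 + a·x^4 + x + a. -/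
open Polynomial

theorem stmt_17 :
    ¬ ∃ (a p q : ℚ), a ≠ 0 ∧
      (X^2 + C p * X + C q : ℚ[X]) ∣ (X^5 + C a * X^4 + X + C a) := by
  rintro ⟨a, p, q, ha, r, hf⟩
  have hd2 : (X^2 + C p * X + C q : ℚ[X]).natDegree = 2 := by compute_degree!
  have hf5 : (X^5 + C a * X^4 + X + C a : ℚ[X]).natDegree = 5 := by compute_degree!
  have hfne : (X^5 + C a * X^4 + X + C a : ℚ[X]) ≠ 0 := by
    intro h; rw [h] at hf5; simp at hf5
  have hdne : (X^2 + C p * X + C q : ℚ[X]) ≠ 0 := by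
    intro h; rw [h] at hd2; simp at hd2
  have hrne : r ≠ 0 := by rintro rfl; rw [mul_zero] at hf; exact hfne hf
  have hr3 : r.natDegree = 3 := by
    have := natDegree_mul hdne hrne
    rw [← hf, hf5, hd2] at this; omega
  have hre : r = C (r.coeff 0) + C (r.coeff 1) * X + C (r.coeff 2) * X^2 + C (r.coeff 3) * X^3 := by
    ext n
    rcases lt_or_ge n 4 with h | h
    · interval_cases n <;> simp
    · rw [coeff_eq_zero_of_natDegree_lt (by omega)]
      simp only [coeff_add, coeff_C_mul, coeff_C, coeff_X, coeff_X_pow]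
      split_ifs <;> first | omega | simp
  rw [hre] at hf
  have hf' : (X^5 + C a * X^4 + X + C a : ℚ[X]) =
      C (q * r.coeff 0) + C (q * r.coeff 1 + p * r.coeff 0) * X +
      C (q * r.coeff 2 + p * r.coeff 1 + r.coeff 0) * X^2 +
      C (q * r.coeff 3 + p * r.coeff 2 + r.coeff 1) * X^3 +
      C (p * r.coeff 3 + r.coeff 2) * X^4 + C (r.coeff 3) * X^5 := by
    rw [hf]; simp only [C_add, C_mul]; ring
  have e : ∀ n, (X^5 + C a * X^4 + X + C a : ℚ[X]).coeff n =
      (C (q * r.coeff 0) + C (q * r.coeff 1 + p * r.coeff 0) * X +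
      C (q * r.coeff 2 + p * r.coeff 1 + r.coeff 0) * X^2 +
      C (q * r.coeff 3 + p * r.coeff 2 + r.coeff 1) * X^3 +
      C (p * r.coeff 3 + r.coeff 2) * X^4 + C (r.coeff 3) * X^5).coeff n :=
    fun n => by rw [hf']
  have e0 := e 0; have e1 := e 1; have e2 := e 2
  have e3 := e 3; have e4 := e 4; have e5 := e 5
  simp only [coeff_add, coeff_C_mul, coeff_C, coeff_X, coeff_X_pow] at e0 e1 e2 e3 e4 e5
  norm_num at e0 e1 e2 e3 e4 e5
  -- e0 : a = q*b0, e1 : 1 = q*b1 + p*b0, e2 : 0 = q*b2+p*b1+b0,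
  -- e3 : 0 = q*b3+p*b2+b1, e4 : a = p*b3+b2, e5 : 1 = b3
  have hb3 : r.coeff 3 = 1 := e5.symm
  have hb2 : r.coeff 2 = a - p := by linear_combination -e4 - p * hb3
  have hb1 : r.coeff 1 = p^2 - a*p - q := by linear_combination -e3 - q * hb3 - p * hb2
  have hb0 : r.coeff 0 = a*p^2 - p^3 + 2*p*q - a*q := by
    linear_combination -e2 - q * hb2 - p * hb1
  have E1 : -p^4 + a*p^3 + 3*p^2*q - 2*a*p*q - q^2 = 1 := by
    linear_combination -e1 - q * hb1 - p * hb0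
  have E0 : -p^3*q + a*p^2*q + 2*p*q^2 - a*q^2 = a := by
    linear_combination -e0 - q * hb0
  have key : (p^2 - 2*q)^2 + (q^2 - 1)^2 = 0 := by
    linear_combination (p^2*q - q^2 - 1) * E1 - (p^3 - 2*p*q) * E0
  have h1 : p^2 = 2*q := by nlinarith [sq_nonneg (p^2 - 2*q), sq_nonneg (q^2 - 1)]
  have h2 : q^2 = 1 := by nlinarith [sq_nonneg (p^2 - 2*q), sq_nonneg (q^2 - 1)]
  have h4 : p^2 = 2 := by nlinarith [sq_nonneg p]
  have h5 : ((|p| : ℚ) : ℝ) = Real.sqrt 2 := by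
    rw [show (2:ℝ) = ((|p|:ℚ):ℝ)^2 by push_cast; rw [sq_abs]; exact_mod_cast h4.symm]
    rw [Real.sqrt_sq (by positivity)]
  exact irrational_sqrt_two ⟨|p|, h5⟩
end
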